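/- With P f = f − ⟨f, h_1⟩ h_1 applied columnwise to matrices, the GCN iterates satisfy ‖P F^(K)‖_F² ≤ μ_high^{2K} · ‖P F^(0)‖_F². -/
import Mathlib


open Matrix

noncomputable section

/-- Euclidean (2-)norm on `ℝ^N`. -/
def rnorm2 {N : ℕ} (f : Fin N → ℝ) : ℝ := Real.sqrt (∑ i, f i ^ 2)

/-- Frobenius norm of a real matrix. -/
def frob {N m : ℕ} (M : Matrix (Fin N) (Fin m) ℝ) : ℝ := Real.sqrt (∑ i, ∑ j, M i j ^ 2)

/-- Entrywise ReLU of a vector. -/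
def reluV {N : ℕ} (f : Fin N → ℝ) : Fin N → ℝ := fun i => max (f i) 0

/-- Entrywise ReLU of a matrix. -/
def reluM {N m : ℕ} (M : Matrix (Fin N) (Fin m) ℝ) : Matrix (Fin N) (Fin m) ℝ :=
  Matrix.of fun i j => max (M i j) 0

/-- `P f = f - ⟨f, h⟩ h`. -/
def Pv {N : ℕ} (h : Fin N → ℝ) (f : Fin N → ℝ) : Fin N → ℝ := f - (f ⬝ᵥ h) • h

/-- `P` applied columnwise to a matrix. -/
def Pcol {N m : ℕ} (h : Fin N → ℝ) (M : Matrix (Fin N) (Fin m) ℝ) :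
    Matrix (Fin N) (Fin m) ℝ :=
  Matrix.of fun i j => M i j - ((fun x => M x j) ⬝ᵥ h) * h i

/-- `μ_high = max{|μ_2|, …, |μ_N|}` (indices `i : Fin N` with `i ≥ 1`). -/
def muHigh {N : ℕ} (μ : Fin N → ℝ) : ℝ := ⨆ i : {i : Fin N // 0 < (i : ℕ)}, |μ i.1|

/-! ### Auxiliary lemmas -/

lemma sum_sq_Pv {N : ℕ} (h1 g : Fin N → ℝ) (hnorm : h1 ⬝ᵥ h1 = 1) :
    ∑ i, (Pv h1 g) i ^ 2 = (∑ i, g i ^ 2) - (g ⬝ᵥ h1) ^ 2 := by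
  have e : ∑ i, (Pv h1 g) i ^ 2
      = ∑ i, (g i ^ 2 - 2 * (g ⬝ᵥ h1) * (g i * h1 i) + (g ⬝ᵥ h1) ^ 2 * (h1 i * h1 i)) := by
    refine Finset.sum_congr rfl fun i _ => ?_
    simp [Pv]
    ring
  rw [e, Finset.sum_add_distrib, Finset.sum_sub_distrib, ← Finset.mul_sum, ← Finset.mul_sum]
  have e1 : ∑ i, g i * h1 i = g ⬝ᵥ h1 := rfl
  have e2 : ∑ i, h1 i * h1 i = 1 := hnorm
  rw [e1, e2]
  ring

lemma relu_Pv {N : ℕ} (h1 f : Fin N → ℝ) (hnorm : h1 ⬝ᵥ h1 = 1) (hpos : ∀ x, 0 ≤ h1 x) :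
    ∑ i, (Pv h1 (reluV f)) i ^ 2 ≤ ∑ i, (Pv h1 f) i ^ 2 := by
  rw [sum_sq_Pv h1 _ hnorm, sum_sq_Pv h1 f hnorm]
  set s : Fin N → ℝ := reluV f with hs
  set t : Fin N → ℝ := fun i => max (-f i) 0 with ht
  have hsq : ∀ i, f i ^ 2 = s i ^ 2 + t i ^ 2 := by
    intro i; simp only [hs, ht, reluV]
    rcases le_total (f i) 0 with hle | hle
    · rw [max_eq_right hle, max_eq_left (by linarith)]; ring
    · rw [max_eq_left hle, max_eq_right (by linarith)]; ring
  have hdiff : ∀ i, f i = s i - t i := by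
    intro i; simp only [hs, ht, reluV]
    rcases le_total (f i) 0 with hle | hle
    · rw [max_eq_right hle, max_eq_left (by linarith)]; ring
    · rw [max_eq_left hle, max_eq_right (by linarith)]; ring
  have hfsum : ∑ i, f i ^ 2 = (∑ i, s i ^ 2) + ∑ i, t i ^ 2 := by
    rw [← Finset.sum_add_distrib]; exact Finset.sum_congr rfl fun i _ => hsq i
  have hcd : f ⬝ᵥ h1 = s ⬝ᵥ h1 - t ⬝ᵥ h1 := by
    simp only [dotProduct, ← Finset.sum_sub_distrib]
    exact Finset.sum_congr rfl fun i _ => by rw [hdiff i]; ring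
  have ha : 0 ≤ s ⬝ᵥ h1 := Finset.sum_nonneg fun i _ =>
    mul_nonneg (le_max_right _ _) (hpos i)
  have hb : 0 ≤ t ⬝ᵥ h1 := Finset.sum_nonneg fun i _ =>
    mul_nonneg (le_max_right _ _) (hpos i)
  have hcs : (t ⬝ᵥ h1) ^ 2 ≤ ∑ i, t i ^ 2 := by
    have hx := Finset.sum_mul_sq_le_sq_mul_sq Finset.univ t h1
    have e2 : ∑ i, h1 i ^ 2 = 1 := by
      rw [← hnorm]; exact Finset.sum_congr rfl fun i _ => by rw [sq]
    calc (t ⬝ᵥ h1) ^ 2 = (∑ i, t i * h1 i) ^ 2 := rfl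
      _ ≤ (∑ i, t i ^ 2) * ∑ i, h1 i ^ 2 := hx
      _ = ∑ i, t i ^ 2 := by rw [e2]; ring
  rw [hfsum, hcd]
  nlinarith [mul_nonneg ha hb]

lemma muHigh_abs_le {N : ℕ} (μ : Fin N → ℝ) (j : Fin N) (hj : 0 < (j : ℕ)) :
    |μ j| ≤ muHigh μ :=
  le_ciSup (f := fun i : {i : Fin N // 0 < (i : ℕ)} => |μ i.1|)
    (Set.Finite.bddAbove (Set.finite_range _)) ⟨j, hj⟩

lemma muHigh_nonneg {N : ℕ} (hN : 2 ≤ N) (μ : Fin N → ℝ) : 0 ≤ muHigh μ :=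
  le_trans (abs_nonneg _) (muHigh_abs_le μ ⟨1, by omega⟩ (by simp))

lemma complete_delta {N : ℕ} (h : Fin N → Fin N → ℝ)
    (hortho : ∀ i j, h i ⬝ᵥ h j = if i = j then 1 else 0) :
    ∀ x y, (∑ j, h j x * h j y) = if x = y then 1 else 0 := by
  intro x y
  set Q : Matrix (Fin N) (Fin N) ℝ := Matrix.of h with hQ
  have h1 : Q * Qᵀ = 1 := by
    ext i j
    simpa [hQ, Matrix.mul_apply, Matrix.one_apply, dotProduct] using hortho i j
  have h2 : Qᵀ * Q = 1 := mul_eq_one_comm.mp h1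
  have := congrFun (congrFun h2 x) y
  simpa [hQ, Matrix.mul_apply, Matrix.one_apply] using this

lemma parseval {N : ℕ} (h : Fin N → Fin N → ℝ)
    (hortho : ∀ i j, h i ⬝ᵥ h j = if i = j then 1 else 0) (v : Fin N → ℝ) :
    ∑ x, v x ^ 2 = ∑ j, (v ⬝ᵥ h j) ^ 2 := by
  refine Eq.symm ?_
  have dd := complete_delta h hortho
  have step1 : ∑ j, (v ⬝ᵥ h j) ^ 2 = ∑ j, ∑ x, ∑ y, v x * v y * (h j x * h j y) := by
    refine Finset.sum_congr rfl fun j _ => ?_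
    rw [dotProduct, sq, Finset.sum_mul_sum]
    exact Finset.sum_congr rfl fun x _ => Finset.sum_congr rfl fun y _ => by ring
  have step2 : ∑ j, ∑ x, ∑ y, v x * v y * (h j x * h j y)
      = ∑ x, ∑ y, v x * v y * ∑ j, h j x * h j y := by
    rw [Finset.sum_comm]
    refine Finset.sum_congr rfl fun x _ => ?_
    rw [Finset.sum_comm]
    exact Finset.sum_congr rfl fun y _ => (Finset.mul_sum _ _ _).symm
  have step3 : ∑ x, ∑ y, v x * v y * ∑ j, h j x * h j y = ∑ x, v x ^ 2 := by
    refine Finset.sum_congr rfl fun x _ => ?_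
    rw [Finset.sum_eq_single x]
    · rw [dd x x]; simp [sq]
    · intro y _ hyx; rw [dd x y]; simp [Ne.symm hyx]
    · simp
  rw [step1, step2, step3]

lemma eigdot {N : ℕ} (H : Matrix (Fin N) (Fin N) ℝ) (hH : H.IsSymm)
    (h : Fin N → Fin N → ℝ) (μ : Fin N → ℝ) (heig : ∀ i, H *ᵥ h i = μ i • h i)
    (v : Fin N → ℝ) (j : Fin N) : (H *ᵥ v) ⬝ᵥ h j = μ j * (v ⬝ᵥ h j) := by
  have e : (H *ᵥ v) ⬝ᵥ h j = v ⬝ᵥ (H *ᵥ h j) := by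
    rw [dotProduct_comm, Matrix.dotProduct_mulVec, ← Matrix.mulVec_transpose, hH.eq,
      dotProduct_comm]
  rw [e, heig j, dotProduct_smul, smul_eq_mul]

lemma specbound {N : ℕ} (hN : 2 ≤ N) (H : Matrix (Fin N) (Fin N) ℝ) (hH : H.IsSymm)
    (h : Fin N → Fin N → ℝ)
    (hortho : ∀ i j, h i ⬝ᵥ h j = if i = j then 1 else 0)
    (μ : Fin N → ℝ) (heig : ∀ i, H *ᵥ h i = μ i • h i)
    (g : Fin N → ℝ) (hg : g ⬝ᵥ h ⟨0, by omega⟩ = 0) :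
    ∑ i, (H *ᵥ g) i ^ 2 ≤ muHigh μ ^ 2 * ∑ i, g i ^ 2 := by
  rw [parseval h hortho (H *ᵥ g), parseval h hortho g, Finset.mul_sum]
  refine Finset.sum_le_sum fun j _ => ?_
  rw [eigdot H hH h μ heig g j, mul_pow]
  rcases Nat.eq_zero_or_pos (j : ℕ) with hj | hj
  · have hj0 : j = ⟨0, by omega⟩ := by ext; simpa using hj
    rw [hj0, hg]
    simp
  · have h1 : |μ j| ≤ muHigh μ := muHigh_abs_le μ j hj
    have h2 : μ j ^ 2 ≤ muHigh μ ^ 2 := by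
      rw [← sq_abs]
      exact pow_le_pow_left₀ (abs_nonneg _) h1 2
    exact mul_le_mul_of_nonneg_right h2 (sq_nonneg _)

lemma Pcol_mul {N m p : ℕ} (h1 : Fin N → ℝ) (M : Matrix (Fin N) (Fin m) ℝ)
    (W : Matrix (Fin m) (Fin p) ℝ) : Pcol h1 (M * W) = Pcol h1 M * W := by
  ext i j
  simp only [Pcol, Matrix.of_apply, Matrix.mul_apply, dotProduct]
  have e : ∀ x : Fin m, (M i x - (∑ x1, M x1 x * h1 x1) * h1 i) * W x j
      = M i x * W x j - (∑ x1, M x1 x * h1 x1) * h1 i * W x j := fun x => by ring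
  rw [Finset.sum_congr rfl fun x _ => e x, Finset.sum_sub_distrib]
  congr 1
  calc (∑ x, (∑ k, M x k * W k j) * h1 x) * h1 i
      = ∑ x, ∑ k, M x k * W k j * (h1 x * h1 i) := by
        rw [Finset.sum_mul]
        refine Finset.sum_congr rfl fun x _ => ?_
        rw [Finset.sum_mul, Finset.sum_mul]
        exact Finset.sum_congr rfl fun k _ => by ring
    _ = ∑ k, ∑ x, M x k * W k j * (h1 x * h1 i) := Finset.sum_comm
    _ = ∑ k, (∑ x1, M x1 k * h1 x1) * h1 i * W k j := by
        refine Finset.sum_congr rfl fun k _ => ?_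
        rw [Finset.sum_mul, Finset.sum_mul]
        exact Finset.sum_congr rfl fun x _ => by ring

lemma frob_submul {N m p : ℕ} (M : Matrix (Fin N) (Fin m) ℝ) (W : Matrix (Fin m) (Fin p) ℝ) :
    ∑ i, ∑ j, (M * W) i j ^ 2 ≤ (∑ i, ∑ k, M i k ^ 2) * ∑ k, ∑ j, W k j ^ 2 := by
  calc ∑ i, ∑ j, (M * W) i j ^ 2
      ≤ ∑ i, ∑ j, (∑ k, M i k ^ 2) * ∑ k, W k j ^ 2 := by
        refine Finset.sum_le_sum fun i _ => Finset.sum_le_sum fun j _ => ?_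
        exact Finset.sum_mul_sq_le_sq_mul_sq Finset.univ (fun k => M i k) (fun k => W k j)
    _ = (∑ i, ∑ k, M i k ^ 2) * ∑ j, ∑ k, W k j ^ 2 := by
        rw [← Finset.sum_mul_sum]
    _ = (∑ i, ∑ k, M i k ^ 2) * ∑ k, ∑ j, W k j ^ 2 := by
        rw [show (∑ j : Fin p, ∑ k, W k j ^ 2) = ∑ k, ∑ j, W k j ^ 2 from Finset.sum_comm]

lemma Pv_mulVec {N : ℕ} (H : Matrix (Fin N) (Fin N) ℝ) (hH : H.IsSymm)
    (h1 : Fin N → ℝ) (μ0 : ℝ) (heig0 : H *ᵥ h1 = μ0 • h1) (f : Fin N → ℝ) :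
    Pv h1 (H *ᵥ f) = H *ᵥ Pv h1 f := by
  have hd : (H *ᵥ f) ⬝ᵥ h1 = μ0 * (f ⬝ᵥ h1) := by
    rw [dotProduct_comm, Matrix.dotProduct_mulVec, ← Matrix.mulVec_transpose, hH.eq,
      dotProduct_comm, eq_comm, dotProduct_comm]
    rw [heig0, dotProduct_smul, smul_eq_mul, dotProduct_comm]
  unfold Pv
  rw [Matrix.mulVec_sub, Matrix.mulVec_smul, heig0, hd, smul_smul,
    mul_comm μ0 (f ⬝ᵥ h1)]

/-- with `P f = f - ⟨f, h_1⟩ h_1` applied columnwise, the GCN iterates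
satisfy `‖P F^(K)‖_F² ≤ μ_high^{2K} ‖P F^(0)‖_F²`. -/
theorem stmt13 (N K : ℕ) (hN : 2 ≤ N) (hK : 1 ≤ K)
    (H : Matrix (Fin N) (Fin N) ℝ) (hH : H.IsSymm)
    (h : Fin N → Fin N → ℝ)
    (hortho : ∀ i j, h i ⬝ᵥ h j = if i = j then 1 else 0)
    (μ : Fin N → ℝ) (heig : ∀ i, H *ᵥ h i = μ i • h i)
    (h1pos : ∀ x, 0 ≤ h ⟨0, by omega⟩ x)
    (m : ℕ → ℕ) (W : ∀ k, Matrix (Fin (m k)) (Fin (m (k + 1))) ℝ)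
    (hW : ∀ k, k < K → frob (W k) ≤ 1)
    (F : ∀ k, Matrix (Fin N) (Fin (m k)) ℝ)
    (hF : ∀ k, k < K → F (k + 1) = reluM (H * F k * W k))
    :
    frob (Pcol (h ⟨0, by omega⟩) (F K)) ^ 2 ≤
      muHigh μ ^ (2 * K) * frob (Pcol (h ⟨0, by omega⟩) (F 0)) ^ 2 := by
  have i0 : Fin N := ⟨0, by omega⟩
  have frobsq : ∀ {n p : ℕ} (M : Matrix (Fin n) (Fin p) ℝ),
      frob M ^ 2 = ∑ i, ∑ j, M i j ^ 2 := by
    intro n p M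
    exact Real.sq_sqrt (by positivity)
  set h0 : Fin N → ℝ := h ⟨0, by omega⟩ with hh0
  have hnorm : h0 ⬝ᵥ h0 = 1 := by
    have := hortho ⟨0, by omega⟩ ⟨0, by omega⟩
    simpa using this
  have hpos : ∀ x, 0 ≤ h0 x := h1pos
  -- the per-step inequality
  have step : ∀ k, k < K →
      (∑ i, ∑ j, (Pcol h0 (F (k + 1))) i j ^ 2)
        ≤ muHigh μ ^ 2 * ∑ i, ∑ j, (Pcol h0 (F k)) i j ^ 2 := by
    intro k hk
    have hFk := hF k hk
    have wsum : (∑ a, ∑ b, (W k) a b ^ 2) ≤ 1 := by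
      have hw := hW k hk
      have hnn : (0:ℝ) ≤ frob (W k) := Real.sqrt_nonneg _
      have hsq : frob (W k) ^ 2 ≤ 1 := by nlinarith
      rw [frobsq (W k)] at hsq
      exact hsq
    have relustep : (∑ j, ∑ i, (Pcol h0 (reluM (H * F k * W k))) i j ^ 2)
        ≤ ∑ j, ∑ i, (Pcol h0 (H * F k * W k)) i j ^ 2 := by
      refine Finset.sum_le_sum fun j _ => ?_
      have e1 : ∀ i, (Pcol h0 (reluM (H * F k * W k))) i j
          = (Pv h0 (reluV (fun x => (H * F k * W k) x j))) i := fun i => rfl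
      have e2 : ∀ i, (Pcol h0 (H * F k * W k)) i j
          = (Pv h0 (fun x => (H * F k * W k) x j)) i := fun i => rfl
      calc ∑ i, (Pcol h0 (reluM (H * F k * W k))) i j ^ 2
          = ∑ i, (Pv h0 (reluV (fun x => (H * F k * W k) x j))) i ^ 2 :=
            Finset.sum_congr rfl fun i _ => by rw [e1 i]
        _ ≤ ∑ i, (Pv h0 (fun x => (H * F k * W k) x j)) i ^ 2 :=
            relu_Pv h0 _ hnorm hpos
        _ = ∑ i, (Pcol h0 (H * F k * W k)) i j ^ 2 :=
            Finset.sum_congr rfl fun i _ => by rw [e2 i]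
    have colstep : ∀ j, (∑ i, (Pcol h0 (H * F k)) i j ^ 2)
        ≤ muHigh μ ^ 2 * ∑ i, (Pcol h0 (F k)) i j ^ 2 := by
      intro j
      set g : Fin N → ℝ := Pv h0 (fun x => F k x j) with hg'
      have hgorth : g ⬝ᵥ h ⟨0, by omega⟩ = 0 := by
        show (Pv h0 (fun x => F k x j)) ⬝ᵥ h0 = 0
        simp [Pv, sub_dotProduct, smul_dotProduct, hnorm]
      have comm : Pv h0 (H *ᵥ fun x => F k x j) = H *ᵥ g :=
        Pv_mulVec H hH h0 (μ ⟨0, by omega⟩) (heig ⟨0, by omega⟩) _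
      have ecol : ∀ i, (Pcol h0 (H * F k)) i j = (H *ᵥ g) i := by
        intro i
        have e : (Pcol h0 (H * F k)) i j = (Pv h0 (H *ᵥ fun x => F k x j)) i := rfl
        rw [e, comm]
      have ecol2 : ∀ i, (Pcol h0 (F k)) i j = g i := by
        intro i; rfl
      calc ∑ i, (Pcol h0 (H * F k)) i j ^ 2
          = ∑ i, (H *ᵥ g) i ^ 2 := Finset.sum_congr rfl fun i _ => by rw [ecol i]
        _ ≤ muHigh μ ^ 2 * ∑ i, g i ^ 2 :=
            specbound hN H hH h hortho μ heig g hgorth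
        _ = muHigh μ ^ 2 * ∑ i, (Pcol h0 (F k)) i j ^ 2 := by
            have := ecol2
            congr 1
    calc (∑ i, ∑ j, (Pcol h0 (F (k + 1))) i j ^ 2)
        = ∑ j, ∑ i, (Pcol h0 (reluM (H * F k * W k))) i j ^ 2 := by
          rw [hFk]; exact Finset.sum_comm
      _ ≤ ∑ j, ∑ i, (Pcol h0 (H * F k * W k)) i j ^ 2 := relustep
      _ = ∑ i, ∑ j, (Pcol h0 (H * F k) * W k) i j ^ 2 := by
          rw [← Pcol_mul]; exact Finset.sum_comm
      _ ≤ (∑ i, ∑ a, (Pcol h0 (H * F k)) i a ^ 2) * ∑ a, ∑ b, (W k) a b ^ 2 :=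
          frob_submul _ _
      _ ≤ (∑ i, ∑ a, (Pcol h0 (H * F k)) i a ^ 2) * 1 := by
          refine mul_le_mul_of_nonneg_left wsum ?_
          positivity
      _ = ∑ a, ∑ i, (Pcol h0 (H * F k)) i a ^ 2 := by
          rw [mul_one]; exact Finset.sum_comm
      _ ≤ ∑ a, muHigh μ ^ 2 * ∑ i, (Pcol h0 (F k)) i a ^ 2 :=
          Finset.sum_le_sum fun a _ => colstep a
      _ = muHigh μ ^ 2 * ∑ i, ∑ a, (Pcol h0 (F k)) i a ^ 2 := by
          rw [← Finset.mul_sum]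
          congr 1
          exact Finset.sum_comm
  -- induction
  have main : ∀ k, k ≤ K →
      (∑ i, ∑ j, (Pcol h0 (F k)) i j ^ 2)
        ≤ muHigh μ ^ (2 * k) * ∑ i, ∑ j, (Pcol h0 (F 0)) i j ^ 2 := by
    intro k
    induction k with
    | zero => intro _; simp
    | succ n ih =>
      intro hn
      have h1 := step n (by omega)
      have h2 := ih (by omega)
      calc (∑ i, ∑ j, (Pcol h0 (F (n + 1))) i j ^ 2)
          ≤ muHigh μ ^ 2 * ∑ i, ∑ j, (Pcol h0 (F n)) i j ^ 2 := h1
        _ ≤ muHigh μ ^ 2 * (muHigh μ ^ (2 * n) * ∑ i, ∑ j, (Pcol h0 (F 0)) i j ^ 2) :=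
            mul_le_mul_of_nonneg_left h2 (sq_nonneg _)
        _ = muHigh μ ^ (2 * (n + 1)) * ∑ i, ∑ j, (Pcol h0 (F 0)) i j ^ 2 := by
            rw [← mul_assoc, ← pow_add, show 2 + 2 * n = 2 * (n + 1) by omega]
  rw [frobsq, frobsq]
  exact main K le_rfl
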